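/- arXiv:math/0010275 — 3 statements merged into one kernel-verified Lean document; each statement's English description precedes it below -/
import Mathlib

section
/- Let ∂ : H^*(M) → H^{*-1}(M) be a graded derivation of degree −1 on the rational cohomology ring of a space M (i.e. ∂(a∪b) = ∂(a)∪b + (−1)^{deg a} a∪∂(b)) satisfying ∂∘∂ = 0. If there exists a class α ∈ H^1(M) with ∂(α) = 1, then ker ∂ = im ∂. -/
/-!
STATEMENT 0 (Lemma 6.2 / Corollary 1.12, algebraic content).

We model the rational cohomology ring `H^*(M;ℚ)` of a space `M` as a graded
ℚ-algebra `A` with grading `ℋ : ℕ → Submodule ℚ A` (a `GradedAlgebra`).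
`d : A →ₗ[ℚ] A` is a graded derivation of degree `-1`:
it maps `ℋ n` into `ℋ (n-1)` and satisfies
`d(a∪b) = d(a)∪b + (-1)^{deg a} a∪d(b)` for homogeneous `a`
(which extends by linearity to all `b`), and `d ∘ d = 0`.
If there is a class `α ∈ H¹(M)` with `d α = 1`, then `ker d = im d`.
-/
theorem wang_derivation_ker_eq_range
    {A : Type*} [Ring A] [Algebra ℚ A]
    (ℋ : ℕ → Submodule ℚ A) [GradedAlgebra ℋ]
    (d : A →ₗ[ℚ] A)
    (hdeg : ∀ n, ∀ a ∈ ℋ n, d a ∈ ℋ (n - 1))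
    (hleib : ∀ n, ∀ a ∈ ℋ n, ∀ b : A,
      d (a * b) = d a * b + ((-1 : ℚ) ^ n) • (a * d b))
    (hsq : d ∘ₗ d = 0)
    (α : A) (hα : α ∈ ℋ 1) (hα1 : d α = 1) :
    LinearMap.ker d = LinearMap.range d := by
  ext x
  constructor
  · intro hx
    rw [LinearMap.mem_ker] at hx
    exact ⟨α * x, by simp [hleib 1 α hα x, hα1, hx]⟩
  · rintro ⟨y, rfl⟩
    have := congrFun (congrArg DFunLike.coe hsq) y
    simpa using this
end

section
/- Let ∂ : H^*(M) → H^{*-1}(M) be a graded derivation of degree −1 with ∂∘∂ = 0, and suppose α ∈ H^1(M) satisfies ∂(α) = 1. Then the map b ↦ α∪b is injective on ker ∂, and H^*(M) decomposes as the direct sum (ker ∂) ⊕ (α ∪ ker ∂). -/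
/-!
STATEMENT 1 (Lemma 6.2 of the paper, structural statement).

`A` models the rational cohomology ring `H^*(M;ℚ)` of a space `M`, as a graded
ℚ-algebra with grading `ℋ : ℕ → Submodule ℚ A`.  `d : A →ₗ[ℚ] A` is a graded
derivation of degree `-1` (the Wang differential): it maps `ℋ n` to `ℋ (n-1)`,
satisfies `d(a∪b) = d(a)∪b + (-1)^{deg a} a∪d(b)` for homogeneous `a`, and
`d ∘ d = 0`.  If `α ∈ H¹(M)` satisfies `d α = 1`, then cup product with `α`
is injective on `ker d`, and `H^*(M)` decomposes as the direct sum
`(ker d) ⊕ (α ∪ ker d)`.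
-/
theorem wang_derivation_direct_sum_decomposition
    {A : Type*} [Ring A] [Algebra ℚ A]
    (ℋ : ℕ → Submodule ℚ A) [GradedAlgebra ℋ]
    (d : A →ₗ[ℚ] A)
    (hdeg : ∀ n, ∀ a ∈ ℋ n, d a ∈ ℋ (n - 1))
    (hleib : ∀ n, ∀ a ∈ ℋ n, ∀ b : A,
      d (a * b) = d a * b + ((-1 : ℚ) ^ n) • (a * d b))
    (hsq : d ∘ₗ d = 0)
    (α : A) (hα : α ∈ ℋ 1) (hα1 : d α = 1) :
    Set.InjOn (fun b => α * b) (LinearMap.ker d) ∧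
    (LinearMap.ker d) ⊓ (Submodule.map (LinearMap.mulLeft ℚ α) (LinearMap.ker d)) = ⊥ ∧
    (LinearMap.ker d) ⊔ (Submodule.map (LinearMap.mulLeft ℚ α) (LinearMap.ker d)) = ⊤ := by
  have key : ∀ b : A, d (α * b) = b - α * d b := by
    intro b
    rw [hleib 1 α hα b, hα1, one_mul, pow_one, neg_smul, one_smul, sub_eq_add_neg]
  have hdd : ∀ x : A, d (d x) = 0 := fun x => congrArg (· x) hsq
  refine ⟨?_, ?_, ?_⟩
  · intro b hb c hc h
    simp only [LinearMap.mem_ker, SetLike.mem_coe] at hb hc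
    have := congrArg d h
    simpa [key, hb, hc] using this
  · rw [eq_bot_iff]
    rintro x ⟨hx, b, hb, rfl⟩
    have hx' : d ((LinearMap.mulLeft ℚ α) b) = 0 := hx
    have hb' : d b = 0 := hb
    rw [LinearMap.mulLeft_apply, key b, hb', mul_zero, sub_zero] at hx'
    show (LinearMap.mulLeft ℚ α) b ∈ (⊥ : Submodule ℚ A)
    rw [LinearMap.mulLeft_apply, hx', mul_zero]
    exact Submodule.zero_mem ⊥
  · rw [eq_top_iff]
    intro x _
    have h1 : x - α * d x ∈ LinearMap.ker d := by
      rw [LinearMap.mem_ker, map_sub, key (d x), hdd x, mul_zero, sub_zero, sub_self]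
    have h2 : α * d x ∈ Submodule.map (LinearMap.mulLeft ℚ α) (LinearMap.ker d) :=
      ⟨d x, by simp [hdd x], rfl⟩
    have : x = (x - α * d x) + α * d x := (sub_add_cancel x (α * d x)).symm
    rw [this]
    exact Submodule.add_mem_sup h1 h2
end

section
/- Let M → P → B be a fibration of spaces with B simply connected, such that in the rational cohomology Leray–Serre spectral sequence the differentials d₂ and d₃ vanish identically on the fiber cohomology H^*(M;ℚ), and suppose the fiber M has dimension 4 as a closed oriented manifold whose top rational cohomology class survives in the spectral sequence (i.e. H^4(M) ⊂ E_∞). Then d₄ vanishes on H³(M;ℚ), and hence the spectral sequence degenerates at E₂ (the bundle is c-split). -/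
open TensorProduct

/-!
STATEMENT 9 (Kedra's argument, Lemma 4.15 of the paper).

Let `M → P → B` be a fibration with `B` simply connected whose fiber is a
closed oriented 4-manifold, such that in the rational cohomology Leray–Serre
spectral sequence `d₂` and `d₃` vanish identically on `H^*(M;ℚ)`.  Then
`E₄ = E₂`, and on the fiber column the only possibly nonzero differential is
`d₄ : H^q(M) → H⁴(B) ⊗ H^{q-3}(M)`.  We model the fiber cohomology as a graded
ℚ-algebra `A` with grading `ℋ` (so `ℋ q = H^q(M;ℚ)`, vanishing above degree 4,
with `H⁰` spanned by `1` and Poincaré duality in the form `hPD`), the group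
`H⁴(B;ℚ)` as a ℚ-vector space `HB4`, and the differential as a linear map
`d : A → A ⊗ HB4` landing in `ℋ(q-3) ⊗ HB4` on `ℋ q`, satisfying the Leibniz
rule (the second tensor factor has even total degree 4, so no extra signs
appear there).  The hypotheses `hd0, hd1, hd2` hold for degree reasons, and
`hd4` expresses that the top rational cohomology class survives
(`H⁴(M) ⊂ E_∞`).  Conclusion: `d₄` vanishes on `H³(M;ℚ)`, and hence `d = 0`
identically — the spectral sequence degenerates at `E₂` (the bundle is c-split).
-/
theorem d4_vanishes_for_four_dimensional_fiber
    {A HB4 : Type*} [Ring A] [Algebra ℚ A]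
    [AddCommGroup HB4] [Module ℚ HB4]
    (ℋ : ℕ → Submodule ℚ A) [GradedAlgebra ℋ]
    (htop : ∀ n, 4 < n → ℋ n = ⊥)
    (h0 : ℋ 0 ≤ Submodule.span ℚ {(1 : A)})
    (hPD : ∀ b ∈ ℋ 3, b ≠ 0 → ∃ c ∈ ℋ 1, b * c ≠ 0)
    (d : A →ₗ[ℚ] A ⊗[ℚ] HB4)
    (hgrade : ∀ q : ℕ, ∀ a ∈ ℋ q, d a ∈
      LinearMap.range (TensorProduct.map ((ℋ (q - 3)).subtype)
        (LinearMap.id : HB4 →ₗ[ℚ] HB4)))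
    (hleib : ∀ n : ℕ, ∀ b ∈ ℋ n, ∀ c : A,
      d (b * c) = (TensorProduct.map (LinearMap.mulRight ℚ c)
          (LinearMap.id : HB4 →ₗ[ℚ] HB4)) (d b)
        + ((-1 : ℚ) ^ n) • (TensorProduct.map (LinearMap.mulLeft ℚ b)
          (LinearMap.id : HB4 →ₗ[ℚ] HB4)) (d c))
    (hd0 : ∀ a ∈ ℋ 0, d a = 0)
    (hd1 : ∀ a ∈ ℋ 1, d a = 0)
    (hd2 : ∀ a ∈ ℋ 2, d a = 0)
    (hd4 : ∀ a ∈ ℋ 4, d a = 0) :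
    (∀ b ∈ ℋ 3, d b = 0) ∧ d = 0 := by

  -- Step 1: d vanishes on ℋ 3.
  have key : ∀ b ∈ ℋ 3, d b = 0 := by
    intro b hb
    by_cases hbz : b = 0
    · simp [hbz]
    -- d b = 1 ⊗ v for some v, since d b lands in (ℋ 0) ⊗ HB4 and ℋ 0 ≤ span {1}.
    obtain ⟨t, ht⟩ := hgrade 3 b hb
    have hgen : ∀ t : (ℋ (3 - 3)) ⊗[ℚ] HB4, ∃ v : HB4,
        (TensorProduct.map ((ℋ (3 - 3)).subtype)
          (LinearMap.id : HB4 →ₗ[ℚ] HB4)) t = (1 : A) ⊗ₜ[ℚ] v := by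
      intro t
      induction t using TensorProduct.induction_on with
      | zero => exact ⟨0, by simp⟩
      | tmul a w =>
          obtain ⟨q, hq⟩ := Submodule.mem_span_singleton.mp (h0 a.2)
          refine ⟨q • w, ?_⟩
          simp only [TensorProduct.map_tmul, LinearMap.id_coe, id_eq,
            Submodule.coe_subtype]
          rw [← hq, TensorProduct.smul_tmul]
      | add x y hx hy =>
          obtain ⟨v₁, hv₁⟩ := hx
          obtain ⟨v₂, hv₂⟩ := hy
          exact ⟨v₁ + v₂, by rw [map_add, hv₁, hv₂, TensorProduct.tmul_add]⟩
    obtain ⟨v, hv'⟩ := hgen t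
    have hv : d b = (1 : A) ⊗ₜ[ℚ] v := by rw [← ht, hv']
    -- Use Poincaré duality to get c with b * c ≠ 0.
    obtain ⟨c, hc1, hbc⟩ := hPD b hb hbz
    have hcz : c ≠ 0 := by rintro rfl; simp at hbc
    -- b * c ∈ ℋ 4, so d (b * c) = 0; Leibniz with d c = 0 gives c ⊗ v = 0.
    have hbc4 : b * c ∈ ℋ 4 := by
      have := SetLike.mul_mem_graded hb hc1
      simpa using this
    have hlz := hleib 3 b hb c
    rw [hd4 _ hbc4, hd1 c hc1, map_zero, smul_zero, add_zero] at hlz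
    have hcv : c ⊗ₜ[ℚ] v = 0 := by
      have := hlz.symm
      rw [hv] at this
      simpa using this
    -- Since c ≠ 0, there is a functional φ with φ c ≠ 0; apply it to conclude v = 0.
    obtain ⟨φ, hφ, -⟩ := Submodule.exists_dual_map_eq_bot_of_notMem
      (p := (⊥ : Submodule ℚ A)) (x := c) (by simpa using hcz) inferInstance
    have hvz : v = 0 := by
      have h2 : (TensorProduct.lid ℚ HB4)
          ((TensorProduct.map φ (LinearMap.id : HB4 →ₗ[ℚ] HB4)) (c ⊗ₜ[ℚ] v)) = φ c • v := by
        simp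
      rw [hcv] at h2
      simp only [map_zero] at h2
      rcases smul_eq_zero.mp h2.symm with h | h
      · exact absurd h hφ
      · exact h
    rw [hv, hvz, TensorProduct.tmul_zero]
  refine ⟨key, ?_⟩
  classical
  -- Step 2: d = 0 on all of A, by decomposing into graded pieces.
  ext a
  have hdecomp := DirectSum.sum_support_decompose ℋ a
  have : d a = ∑ i ∈ (DirectSum.decompose ℋ a).support,
      d (DirectSum.decompose ℋ a i : A) := by
    conv_lhs => rw [← hdecomp]
    exact map_sum d _ _
  rw [LinearMap.zero_apply, this]
  apply Finset.sum_eq_zero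
  intro i _
  have hmem : ((DirectSum.decompose ℋ a i : ℋ i) : A) ∈ ℋ i := (DirectSum.decompose ℋ a i).2
  by_cases hi : 4 < i
  · have hle : ℋ i ≤ ⊥ := (htop i hi).le
    rw [(Submodule.mem_bot ℚ).mp (hle hmem), map_zero]
  push_neg at hi
  interval_cases i
  · exact hd0 _ hmem
  · exact hd1 _ hmem
  · exact hd2 _ hmem
  · exact key _ hmem
  · exact hd4 _ hmem
end
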